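/- For all real x ≠ y, the Hermite limit kernel at α = 0 and θ = 1 is the sine kernel: 𝒦^{Her(0,1)}(x,y) = sin(2(x−y)) / (π(x−y)). -/

import Mathlib

/-- Signed power: `x^θ := sign(x)·|x|^θ`. -/
noncomputable def sgnPow (x θ : ℝ) : ℝ := Real.sign x * |x| ^ θ

/-- The limit kernel `𝒦^{(α,θ)}(x,y)` of the biorthogonal Jacobi/Laguerre ensembles. -/
noncomputable def limitKernel (α θ x y : ℝ) : ℝ :=
  ∑' k : ℕ, ∑' l : ℕ,
    ((-1) ^ k * x ^ k / ((Nat.factorial k : ℝ) * Real.Gamma ((α + 1 + k) / θ))) *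
      ((-1) ^ l * y ^ (θ * (l : ℝ)) /
        ((Nat.factorial l : ℝ) * Real.Gamma (α + 1 + θ * l))) *
      (θ / (α + 1 + k + θ * l))

/-- The Hermite limit kernel `𝒦^{Her(α,θ)}(x,y) = 𝒦^{((α-1)/2,θ)}(x²,y²) +
x^θ y · 𝒦^{((α+θ)/2,θ)}(x²,y²)`. -/
noncomputable def hermiteLimitKernel (α θ x y : ℝ) : ℝ :=
  limitKernel ((α - 1) / 2) θ (x ^ 2) (y ^ 2) +
    sgnPow x θ * y * limitKernel ((α + θ) / 2) θ (x ^ 2) (y ^ 2)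

/-!
For `θ = 1` and `α = ∓1/2` all Gamma values are at half-integers, and Legendre's duplication
formula turns `k! Γ(k + 1/2)` and `k! Γ(k + 3/2)` into `(2k)! √π / 2^(2k)` and
`(2k+1)! √π / 2^(2k+1)`. The two kernels making up `𝒦^{Her(0,1)}(x, y)` then become `2/π` times
the (even, even) and the (odd, odd) parts of the double series `∑ c^i d^j / (i! j!) · s (i + j)`
with `c = 2x`, `d = -2y` and `s m` the Taylor coefficients of `sinc`. Since `s` vanishes at odd
arguments, the mixed-parity terms are zero, and grouping the whole series by `i + j` with the
binomial theorem leaves `∑ s m (c + d)^m / m! = sinc (2 (x - y))`.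
-/

open Real Finset
open scoped Nat

noncomputable def sincCoeff (m : ℕ) : ℝ := if Even m then (-1) ^ (m / 2) / (m + 1) else 0

lemma sincCoeff_two_mul (k : ℕ) : sincCoeff (2 * k) = (-1) ^ k / (2 * k + 1) := by
  simp [sincCoeff]

lemma sincCoeff_of_odd {m : ℕ} (hm : Odd m) : sincCoeff m = 0 := by
  simp [sincCoeff, Nat.not_even_iff_odd.2 hm]

lemma abs_sincCoeff_le_one (m : ℕ) : |sincCoeff m| ≤ 1 := by
  unfold sincCoeff
  split_ifs
  · rw [abs_div, abs_pow, abs_neg, abs_one, one_pow, abs_of_pos (by positivity)]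
    exact div_le_one_of_le₀ (by simp) (by positivity)
  · simp

lemma hasSum_sincCoeff (u : ℝ) : HasSum (fun m ↦ sincCoeff m * (u ^ m / m !)) (sinc u) := by
  have hodd : HasSum (fun k ↦ sincCoeff (2 * k + 1) * (u ^ (2 * k + 1) / (2 * k + 1)!)) 0 := by
    simp only [sincCoeff_of_odd (odd_two_mul_add_one _), zero_mul]
    exact hasSum_zero
  have heven : HasSum (fun k ↦ sincCoeff (2 * k) * (u ^ (2 * k) / (2 * k)!)) (sinc u) := by
    have hterm (k : ℕ) : sincCoeff (2 * k) * (u ^ (2 * k) / (2 * k)!) =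
        (-1) ^ k * u ^ (2 * k) / (2 * k + 1)! := by
      rw [sincCoeff_two_mul, Nat.factorial_succ]
      push_cast
      field_simp
    simp_rw [hterm]
    by_cases hu : u = 0
    · subst hu
      simpa using hasSum_single (f := fun k : ℕ ↦ (-1) ^ k * (0 : ℝ) ^ (2 * k) / (2 * k + 1)!) 0
        fun k hk ↦ by simp [hk]
    · rw [sinc_of_ne_zero hu]
      refine ((Real.hasSum_sin u).div_const u).congr_fun fun k ↦ ?_
      rw [pow_succ]
      field_simp
  simpa only [add_zero] using
    HasSum.even_add_odd (f := fun m ↦ sincCoeff m * (u ^ m / m !)) heven hodd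

theorem HasSum.sum_antidiagonal {A E : Type*} [AddCommMonoid A] [HasAntidiagonal A]
    [AddCommMonoid E] [TopologicalSpace E] [ContinuousAdd E] [RegularSpace E]
    {f : A × A → E} {a : E} (hf : HasSum f a) :
    HasSum (fun n ↦ ∑ p ∈ antidiagonal n, f p) a :=
  (HasAntidiagonal.sigmaAntidiagonalEquivProd.hasSum_iff.2 hf).sigma fun _ ↦ Finset.hasSum _ _

lemma sum_antidiagonal_pow_div_factorial (c d : ℝ) (n : ℕ) :
    ∑ p ∈ antidiagonal n, c ^ p.1 / p.1 ! * (d ^ p.2 / p.2 !) = (c + d) ^ n / n ! := by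
  rw [(Commute.all c d).add_pow', Finset.sum_div]
  refine Finset.sum_congr rfl fun p hp ↦ ?_
  rw [← HasAntidiagonal.mem_antidiagonal.mp hp, nsmul_eq_mul, Nat.cast_add_choose]
  field_simp

lemma hasSum_pow_div_factorial_mul_weight {w : ℕ → ℝ} {C : ℝ} (hw : ∀ m, |w m| ≤ C)
    (c d : ℝ) {s : ℝ} (hs : HasSum (fun m ↦ w m * ((c + d) ^ m / m !)) s) :
    HasSum (fun p : ℕ × ℕ ↦ c ^ p.1 / p.1 ! * (d ^ p.2 / p.2 !) * w (p.1 + p.2)) s := by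
  have hsum : Summable (fun p : ℕ × ℕ ↦ c ^ p.1 / p.1 ! * (d ^ p.2 / p.2 !) * w (p.1 + p.2)) := by
    have hbound := ((Real.summable_pow_div_factorial |c|).mul_of_nonneg
      (Real.summable_pow_div_factorial |d|) (fun _ ↦ by positivity) (fun _ ↦ by positivity))
    refine Summable.of_norm_bounded (hbound.mul_right C) fun p ↦ ?_
    simp only [norm_mul, norm_div, norm_pow, Real.norm_eq_abs, Nat.abs_cast]
    exact mul_le_mul_of_nonneg_left (hw _) (by positivity)
  convert hsum.hasSum using 1
  refine hs.unique (hsum.hasSum.sum_antidiagonal.congr_fun fun n ↦ ?_)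
  rw [← sum_antidiagonal_pow_div_factorial, Finset.mul_sum]
  refine Finset.sum_congr rfl fun p hp ↦ ?_
  rw [HasAntidiagonal.mem_antidiagonal.mp hp]
  ring

theorem tsum_prod_eq_even_add_odd {E : Type*} [NormedAddCommGroup E] [CompleteSpace E]
    {f : ℕ × ℕ → E} (hf : Summable f) (hodd : ∀ i j, Odd (i + j) → f (i, j) = 0) :
    ∑' p, f p = ∑' (k) (l), f (2 * k, 2 * l) + ∑' (k) (l), f (2 * k + 1, 2 * l + 1) := by
  let e : ℕ × ℕ ⊕ ℕ × ℕ → ℕ × ℕ :=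
    Sum.elim (fun q ↦ (2 * q.1, 2 * q.2)) (fun q ↦ (2 * q.1 + 1, 2 * q.2 + 1))
  have he : Function.Injective e := by
    rintro (⟨a, b⟩ | ⟨a, b⟩) (⟨c, d⟩ | ⟨c, d⟩) h <;> simp [e] at h ⊢ <;> omega
  have hrange : ∀ p ∉ Set.range e, f p = 0 := by
    rintro ⟨i, j⟩ hp
    refine hodd i j (Nat.odd_iff.2 ?_)
    obtain ⟨a, rfl | rfl⟩ := Nat.even_or_odd' i <;> obtain ⟨b, rfl | rfl⟩ := Nat.even_or_odd' j
    · exact absurd ⟨.inl (a, b), rfl⟩ hp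
    · omega
    · omega
    · exact absurd ⟨.inr (a, b), rfl⟩ hp
  have hfe : Summable (f ∘ e) := ((he.hasSum_iff hrange).2 hf.hasSum).summable
  have hsumEven : Summable fun q : ℕ × ℕ ↦ f (2 * q.1, 2 * q.2) :=
    hfe.comp_injective Sum.inl_injective
  have hsumOdd : Summable fun q : ℕ × ℕ ↦ f (2 * q.1 + 1, 2 * q.2 + 1) :=
    hfe.comp_injective Sum.inr_injective
  rw [((he.hasSum_iff hrange).1 (hsumEven.hasSum.sum hsumOdd.hasSum)).tsum_eq, hsumEven.tsum_prod,
    hsumOdd.tsum_prod]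

lemma Gamma_mul_Gamma_add_half_nat (m : ℕ) :
    Gamma ((m + 1) / 2) * Gamma ((m + 1) / 2 + 1 / 2) = m ! * √π / 2 ^ m := by
  rw [Gamma_mul_Gamma_add_half, show 2 * ((m + 1 : ℝ) / 2) = m + 1 by ring, Gamma_nat_eq_factorial,
    show (1 : ℝ) - (m + 1) = -m by ring, rpow_neg zero_le_two, rpow_natCast]
  field_simp

lemma factorial_mul_Gamma_add_half (k : ℕ) :
    k ! * Gamma (k + 1 / 2) = (2 * k)! * √π / 2 ^ (2 * k) := by
  have h := Gamma_mul_Gamma_add_half_nat (2 * k)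
  rw [show ((2 * k : ℕ) + 1 : ℝ) / 2 = k + 1 / 2 by push_cast; ring,
    show (k : ℝ) + 1 / 2 + 1 / 2 = k + 1 by ring, Gamma_nat_eq_factorial] at h
  rw [← h, mul_comm]

lemma factorial_mul_Gamma_add_three_halves (k : ℕ) :
    k ! * Gamma (k + 3 / 2) = (2 * k + 1)! * √π / 2 ^ (2 * k + 1) := by
  have h := Gamma_mul_Gamma_add_half_nat (2 * k + 1)
  rw [show ((2 * k + 1 : ℕ) + 1 : ℝ) / 2 = k + 1 by push_cast; ring,
    show (k : ℝ) + 1 + 1 / 2 = k + 3 / 2 by ring, Gamma_nat_eq_factorial] at h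
  rw [← h]

lemma sgnPow_one (x : ℝ) : sgnPow x 1 = x := by
  rw [sgnPow, rpow_one]
  rcases lt_trichotomy x 0 with h | rfl | h
  · rw [sign_of_neg h, abs_of_neg h]; ring
  · simp
  · rw [sign_of_pos h, abs_of_pos h, one_mul]

lemma limitKernel_one (α x y : ℝ) :
    limitKernel α 1 x y = ∑' (k : ℕ) (l : ℕ),
      (-1) ^ k * x ^ k / (k ! * Gamma (α + 1 + k)) *
        ((-1) ^ l * y ^ l / (l ! * Gamma (α + 1 + l))) / (α + 1 + k + l) := by
  simp only [limitKernel, div_one, one_mul, rpow_natCast, mul_one_div]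

noncomputable def sincTerm (c d : ℝ) (p : ℕ × ℕ) : ℝ :=
  c ^ p.1 / p.1 ! * (d ^ p.2 / p.2 !) * sincCoeff (p.1 + p.2)

lemma hasSum_sincTerm (c d : ℝ) : HasSum (sincTerm c d) (sinc (c + d)) :=
  hasSum_pow_div_factorial_mul_weight abs_sincCoeff_le_one c d (hasSum_sincCoeff _)

lemma sincTerm_of_odd (c d : ℝ) {i j : ℕ} (h : Odd (i + j)) : sincTerm c d (i, j) = 0 := by
  rw [sincTerm, sincCoeff_of_odd h, mul_zero]

lemma limitKernel_neg_half_one_sq (x y : ℝ) :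
    limitKernel (-1 / 2) 1 (x ^ 2) (y ^ 2) =
      2 / π * ∑' (k : ℕ) (l : ℕ), sincTerm (2 * x) (-(2 * y)) (2 * k, 2 * l) := by
  rw [limitKernel_one, ← tsum_mul_left]
  refine tsum_congr fun k ↦ ?_
  rw [← tsum_mul_left]
  refine tsum_congr fun l ↦ ?_
  rw [show (-1 / 2 : ℝ) + 1 + k = k + 1 / 2 by ring, show (-1 / 2 : ℝ) + 1 + l = l + 1 / 2 by ring,
    factorial_mul_Gamma_add_half, factorial_mul_Gamma_add_half, sincTerm,
    show 2 * k + 2 * l = 2 * (k + l) by ring, sincCoeff_two_mul, (even_two_mul l).neg_pow]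
  field_simp
  rw [sq_sqrt pi_pos.le]
  push_cast
  ring

lemma mul_limitKernel_half_one_sq (x y : ℝ) :
    x * y * limitKernel (1 / 2) 1 (x ^ 2) (y ^ 2) =
      2 / π * ∑' (k : ℕ) (l : ℕ), sincTerm (2 * x) (-(2 * y)) (2 * k + 1, 2 * l + 1) := by
  rw [limitKernel_one, ← tsum_mul_left, ← tsum_mul_left]
  refine tsum_congr fun k ↦ ?_
  rw [← tsum_mul_left, ← tsum_mul_left]
  refine tsum_congr fun l ↦ ?_
  rw [show (1 / 2 : ℝ) + 1 + k = k + 3 / 2 by ring, show (1 / 2 : ℝ) + 1 + l = l + 3 / 2 by ring,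
    factorial_mul_Gamma_add_three_halves, factorial_mul_Gamma_add_three_halves, sincTerm,
    show 2 * k + 1 + (2 * l + 1) = 2 * (k + l + 1) by ring, sincCoeff_two_mul,
    (odd_two_mul_add_one l).neg_pow]
  field_simp
  rw [sq_sqrt pi_pos.le]
  push_cast
  ring

theorem hermiteLimitKernel_eq_sine_kernel (x y : ℝ) (hxy : x ≠ y) :
    hermiteLimitKernel 0 1 x y =
      Real.sin (2 * (x - y)) / (Real.pi * (x - y)) := by
  have hxy' : x - y ≠ 0 := sub_ne_zero.mpr hxy
  rw [hermiteLimitKernel, sgnPow_one, show ((0 : ℝ) - 1) / 2 = -1 / 2 by norm_num,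
    show ((0 : ℝ) + 1) / 2 = 1 / 2 by norm_num, limitKernel_neg_half_one_sq,
    mul_limitKernel_half_one_sq, ← mul_add,
    ← tsum_prod_eq_even_add_odd (hasSum_sincTerm _ _).summable fun i j ↦ sincTerm_of_odd _ _,
    (hasSum_sincTerm _ _).tsum_eq, ← sub_eq_add_neg, ← mul_sub,
    sinc_of_ne_zero (mul_ne_zero two_ne_zero hxy')]
  field_simp
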